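/- Lipschitz dependence of the PF log-likelihood on parameters, between two sieve elements (Lemma 3, second inequality): let τ, M_h, M_m > 0, d ∈ ℕ, Θ ⊆ ℝ a bounded interval, and B = [0, τ·e^{M_h + M_m}]. Assume G_θ(x) and log g_θ(x) have partial derivatives in θ and in x that are bounded in absolute value by L on Θ × B. Then there exists a constant C > 0, depending only on τ, M_h, M_m and L, such that for all continuous h₁, h₂ : [0,τ] → ℝ with ‖h₁‖∞ ≤ M_h and ‖h₂‖∞ ≤ M_h, all m₁, m₂ : [−1,1]^d → ℝ with ‖m₁‖∞ ≤ M_m and ‖m₂‖∞ ≤ M_m, and all θ₁, θ₂ ∈ Θ: sup over (T,δ,Z) ∈ [0,τ]×{0,1}×[−1,1]^d of |l(T,δ,Z; h₁,m₁,θ₁) − l(T,δ,Z; h₂,m₂,θ₂)| ≤ C·(|θ₁ − θ₂| + ‖h₁ − h₂‖∞ + ‖m₁ − m₂‖∞). -/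
import Mathlib


/-- The PF observed log-likelihood:
`l(T,δ,Z; h,m,θ) = δ·log g_θ(e^{m(Z)} ∫₀^T e^{h(s)} ds) + δ·h(T) + δ·m(Z)
                   − G_θ(e^{m(Z)} ∫₀^T e^{h(s)} ds)`. -/
noncomputable def lPF (d : ℕ) (G g : ℝ → ℝ → ℝ) (h : ℝ → ℝ)
    (m : (Fin d → ℝ) → ℝ) (θ T δ : ℝ) (Z : Fin d → ℝ) : ℝ :=
  δ * Real.log (g θ (Real.exp (m Z) * ∫ s in (0:ℝ)..T, Real.exp (h s)))
    + δ * h T + δ * m Z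
    - G θ (Real.exp (m Z) * ∫ s in (0:ℝ)..T, Real.exp (h s))

lemma mvt_abs {s : Set ℝ} (hs : Convex ℝ s) {f : ℝ → ℝ} {L : ℝ}
    (hf : ∀ x ∈ s, ∃ D, HasDerivWithinAt f D s x ∧ |D| ≤ L)
    {a b : ℝ} (ha : a ∈ s) (hb : b ∈ s) : |f a - f b| ≤ L * |a - b| := by
  classical
  set f' : ℝ → ℝ := fun x => if hx : x ∈ s then (hf x hx).choose else 0 with hf'
  have h1 : ∀ x ∈ s, HasDerivWithinAt f (f' x) s x := fun x hx => by
    simp only [hf', dif_pos hx]; exact (hf x hx).choose_spec.1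
  have h2 : ∀ x ∈ s, ‖f' x‖ ≤ L := fun x hx => by
    simp only [hf', dif_pos hx, Real.norm_eq_abs]; exact (hf x hx).choose_spec.2
  have := hs.norm_image_sub_le_of_norm_hasDerivWithin_le h1 h2 hb ha
  simpa [Real.norm_eq_abs] using this

lemma exp_lip {M a b : ℝ} (ha : a ≤ M) (hb : b ≤ M) :
    |Real.exp a - Real.exp b| ≤ Real.exp M * |a - b| := by
  refine mvt_abs (convex_Iic M) ?_ ha hb
  intro x hx
  exact ⟨Real.exp x, (Real.hasDerivAt_exp x).hasDerivWithinAt,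
    by rw [abs_of_pos (Real.exp_pos x)]; exact Real.exp_le_exp.2 hx⟩

set_option maxHeartbeats 1000000 in
/-- Lipschitz dependence of the PF log-likelihood on parameters, between two
sieve elements (Lemma 3, second inequality). -/
theorem pf_loglik_lipschitz_sieve_vs_sieve
    (τ Mh Mm L : ℝ) (hτ : 0 < τ) (hMh : 0 < Mh) (hMm : 0 < Mm) (hL : 0 < L) :
    ∃ C > 0, ∀ (d : ℕ) (Θ : Set ℝ), Bornology.IsBounded Θ → Θ.OrdConnected →
      ∀ G g : ℝ → ℝ → ℝ,
      -- g is the partial derivative of G in its second argument, and is positive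
      (∀ θ ∈ Θ, ∀ x : ℝ, 0 ≤ x →
        HasDerivWithinAt (G θ) (g θ x) (Set.Ici 0) x ∧ 0 < g θ x) →
      -- |∂G/∂x| = |g| ≤ L on Θ × B, where B = [0, τ·e^{Mh+Mm}]
      (∀ θ ∈ Θ, ∀ x ∈ Set.Icc (0:ℝ) (τ * Real.exp (Mh + Mm)), |g θ x| ≤ L) →
      -- |∂G/∂θ| ≤ L on Θ × B
      (∀ θ ∈ Θ, ∀ x ∈ Set.Icc (0:ℝ) (τ * Real.exp (Mh + Mm)),
        ∃ D : ℝ, HasDerivWithinAt (fun t => G t x) D Θ θ ∧ |D| ≤ L) →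
      -- |∂(log g)/∂x| ≤ L on Θ × B
      (∀ θ ∈ Θ, ∀ x ∈ Set.Icc (0:ℝ) (τ * Real.exp (Mh + Mm)),
        ∃ D : ℝ, HasDerivWithinAt (fun y => Real.log (g θ y))
          D (Set.Icc (0:ℝ) (τ * Real.exp (Mh + Mm))) x ∧ |D| ≤ L) →
      -- |∂(log g)/∂θ| ≤ L on Θ × B
      (∀ θ ∈ Θ, ∀ x ∈ Set.Icc (0:ℝ) (τ * Real.exp (Mh + Mm)),
        ∃ D : ℝ, HasDerivWithinAt (fun t => Real.log (g t x)) D Θ θ ∧ |D| ≤ L) →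
      ∀ h₁ : ℝ → ℝ, ContinuousOn h₁ (Set.Icc 0 τ) →
        (∀ t ∈ Set.Icc (0:ℝ) τ, |h₁ t| ≤ Mh) →
      ∀ h₂ : ℝ → ℝ, ContinuousOn h₂ (Set.Icc 0 τ) →
        (∀ t ∈ Set.Icc (0:ℝ) τ, |h₂ t| ≤ Mh) →
      ∀ m₁ : (Fin d → ℝ) → ℝ,
        (∀ z ∈ Set.Icc (fun _ : Fin d => (-1:ℝ)) (fun _ : Fin d => (1:ℝ)),
          |m₁ z| ≤ Mm) →
      ∀ m₂ : (Fin d → ℝ) → ℝ,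
        (∀ z ∈ Set.Icc (fun _ : Fin d => (-1:ℝ)) (fun _ : Fin d => (1:ℝ)),
          |m₂ z| ≤ Mm) →
      ∀ θ₁ ∈ Θ, ∀ θ₂ ∈ Θ,
      ∀ T ∈ Set.Icc (0:ℝ) τ, ∀ δ : ℝ, (δ = 0 ∨ δ = 1) →
      ∀ Z ∈ Set.Icc (fun _ : Fin d => (-1:ℝ)) (fun _ : Fin d => (1:ℝ)),
        |lPF d G g h₁ m₁ θ₁ T δ Z - lPF d G g h₂ m₂ θ₂ T δ Z| ≤
          C * (|θ₁ - θ₂|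
            + sSup ((fun t => |h₁ t - h₂ t|) '' Set.Icc (0:ℝ) τ)
            + sSup ((fun z => |m₁ z - m₂ z|) ''
                Set.Icc (fun _ : Fin d => (-1:ℝ)) (fun _ : Fin d => (1:ℝ)))) := by
  set K := τ * Real.exp (Mh + Mm) with hKdef
  have hK : 0 < K := mul_pos hτ (Real.exp_pos _)
  refine ⟨2*L + 2*L*K + 1, by positivity, ?_⟩
  intro d Θ hΘb hΘoc G g hGg hgL hGθ hlgx hlgθ h₁ hc₁ hb₁ h₂ hc₂ hb₂ m₁ hm₁ m₂ hm₂
    θ₁ hθ₁ θ₂ hθ₂ T hT δ hδ Z hZ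
  obtain ⟨hT0, hTτ⟩ := hT
  have hΘconv : Convex ℝ Θ := convex_iff_ordConnected.2 hΘoc
  set Sh := sSup ((fun t => |h₁ t - h₂ t|) '' Set.Icc (0:ℝ) τ) with hShdef
  set Sm := sSup ((fun z => |m₁ z - m₂ z|) ''
      Set.Icc (fun _ : Fin d => (-1:ℝ)) (fun _ : Fin d => (1:ℝ))) with hSmdef
  -- sSup bounds
  have hShbdd : BddAbove ((fun t => |h₁ t - h₂ t|) '' Set.Icc (0:ℝ) τ) := by
    refine ⟨2*Mh, ?_⟩; rintro y ⟨t, ht, rfl⟩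
    calc |h₁ t - h₂ t| ≤ |h₁ t| + |h₂ t| := abs_sub _ _
      _ ≤ 2*Mh := by have := hb₁ t ht; have := hb₂ t ht; linarith
  have hShub : ∀ t ∈ Set.Icc (0:ℝ) τ, |h₁ t - h₂ t| ≤ Sh := fun t ht =>
    le_csSup hShbdd ⟨t, ht, rfl⟩
  have hSh0 : 0 ≤ Sh := (abs_nonneg _).trans (hShub 0 ⟨le_refl 0, hτ.le⟩)
  have hSmbdd : BddAbove ((fun z => |m₁ z - m₂ z|) ''
      Set.Icc (fun _ : Fin d => (-1:ℝ)) (fun _ : Fin d => (1:ℝ))) := by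
    refine ⟨2*Mm, ?_⟩; rintro y ⟨z, hz, rfl⟩
    calc |m₁ z - m₂ z| ≤ |m₁ z| + |m₂ z| := abs_sub _ _
      _ ≤ 2*Mm := by have := hm₁ z hz; have := hm₂ z hz; linarith
  have hSmub : |m₁ Z - m₂ Z| ≤ Sm := le_csSup hSmbdd ⟨Z, hZ, rfl⟩
  have hSm0 : 0 ≤ Sm := (abs_nonneg _).trans hSmub
  -- integrals
  have hint : ∀ (h : ℝ → ℝ), ContinuousOn h (Set.Icc 0 τ) →
      IntervalIntegrable (fun s => Real.exp (h s)) MeasureTheory.volume 0 T := by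
    intro h hc
    apply ContinuousOn.intervalIntegrable
    apply (Real.continuous_exp.comp_continuousOn (hc.mono ?_))
    rw [Set.uIcc_of_le hT0]
    exact Set.Icc_subset_Icc le_rfl hTτ
  have hint1 := hint h₁ hc₁
  have hint2 := hint h₂ hc₂
  set I₁ := ∫ s in (0:ℝ)..T, Real.exp (h₁ s) with hI₁
  set I₂ := ∫ s in (0:ℝ)..T, Real.exp (h₂ s) with hI₂
  have huIoc : Set.uIoc (0:ℝ) T ⊆ Set.Icc 0 τ := by
    rw [Set.uIoc_of_le hT0]
    exact (Set.Ioc_subset_Icc_self).trans (Set.Icc_subset_Icc le_rfl hTτ)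
  have hInn : ∀ (h : ℝ → ℝ), (∀ t ∈ Set.Icc (0:ℝ) τ, |h t| ≤ Mh) →
      (0 ≤ ∫ s in (0:ℝ)..T, Real.exp (h s)) ∧
      (∫ s in (0:ℝ)..T, Real.exp (h s)) ≤ τ * Real.exp Mh := by
    intro h hb
    constructor
    · exact intervalIntegral.integral_nonneg hT0 (fun s _ => (Real.exp_pos _).le)
    · have := intervalIntegral.norm_integral_le_of_norm_le_const
        (C := Real.exp Mh) (f := fun s => Real.exp (h s)) (a := (0:ℝ)) (b := T) ?_
      · rw [Real.norm_eq_abs] at this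
        have h2 : |T - 0| ≤ τ := by rw [sub_zero, abs_of_nonneg hT0]; exact hTτ
        calc (∫ s in (0:ℝ)..T, Real.exp (h s)) ≤ |∫ s in (0:ℝ)..T, Real.exp (h s)| :=
              le_abs_self _
          _ ≤ Real.exp Mh * |T - 0| := this
          _ ≤ Real.exp Mh * τ := by
              exact mul_le_mul_of_nonneg_left h2 (Real.exp_pos _).le
          _ = τ * Real.exp Mh := mul_comm _ _
      · intro x hx
        rw [Real.norm_eq_abs, abs_of_pos (Real.exp_pos _)]
        exact Real.exp_le_exp.2 ((abs_le.1 (hb x (huIoc hx))).2)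
    done
  obtain ⟨hI₁0, hI₁le⟩ := hInn h₁ hb₁
  obtain ⟨hI₂0, hI₂le⟩ := hInn h₂ hb₂
  have hm₁Z := hm₁ Z hZ
  have hm₂Z := hm₂ Z hZ
  set x₁ := Real.exp (m₁ Z) * I₁ with hx₁
  set x₂ := Real.exp (m₂ Z) * I₂ with hx₂
  have hxmem : ∀ (mz I : ℝ), |mz| ≤ Mm → 0 ≤ I → I ≤ τ * Real.exp Mh →
      Real.exp mz * I ∈ Set.Icc (0:ℝ) K := by
    intro mz I hmz hI0 hIle
    constructor
    · positivity
    · calc Real.exp mz * I ≤ Real.exp Mm * (τ * Real.exp Mh) := by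
            apply mul_le_mul (Real.exp_le_exp.2 (abs_le.1 hmz).2) hIle hI0 (Real.exp_pos _).le
        _ = K := by rw [hKdef, Real.exp_add]; ring
  have hx₁mem : x₁ ∈ Set.Icc (0:ℝ) K := hxmem _ _ hm₁Z hI₁0 hI₁le
  have hx₂mem : x₂ ∈ Set.Icc (0:ℝ) K := hxmem _ _ hm₂Z hI₂0 hI₂le
  -- |I₁ - I₂| ≤ τ e^Mh Sh
  have hIdiff : |I₁ - I₂| ≤ τ * Real.exp Mh * Sh := by
    rw [hI₁, hI₂, ← intervalIntegral.integral_sub hint1 hint2]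
    have := intervalIntegral.norm_integral_le_of_norm_le_const
      (C := Real.exp Mh * Sh)
      (f := fun s => Real.exp (h₁ s) - Real.exp (h₂ s)) (a := (0:ℝ)) (b := T) ?_
    · rw [Real.norm_eq_abs] at this
      refine this.trans ?_
      rw [sub_zero, abs_of_nonneg hT0]
      calc Real.exp Mh * Sh * T ≤ Real.exp Mh * Sh * τ := by
            apply mul_le_mul_of_nonneg_left hTτ (by positivity)
        _ = τ * Real.exp Mh * Sh := by ring
    · intro s hs
      rw [Real.norm_eq_abs]
      have hsmem := huIoc hs
      calc |Real.exp (h₁ s) - Real.exp (h₂ s)| ≤ Real.exp Mh * |h₁ s - h₂ s| :=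
            exp_lip (abs_le.1 (hb₁ s hsmem)).2 (abs_le.1 (hb₂ s hsmem)).2
        _ ≤ Real.exp Mh * Sh := by
            exact mul_le_mul_of_nonneg_left (hShub s hsmem) (Real.exp_pos _).le
  -- |x₁ - x₂| ≤ K * (Sm + Sh)
  have hxdiff : |x₁ - x₂| ≤ K * (Sm + Sh) := by
    have key : x₁ - x₂ = (Real.exp (m₁ Z) - Real.exp (m₂ Z)) * I₁
        + Real.exp (m₂ Z) * (I₁ - I₂) := by rw [hx₁, hx₂]; ring
    rw [key]
    calc |(Real.exp (m₁ Z) - Real.exp (m₂ Z)) * I₁ + Real.exp (m₂ Z) * (I₁ - I₂)|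
        ≤ |(Real.exp (m₁ Z) - Real.exp (m₂ Z)) * I₁| + |Real.exp (m₂ Z) * (I₁ - I₂)| :=
          abs_add_le _ _
      _ = |Real.exp (m₁ Z) - Real.exp (m₂ Z)| * |I₁| + |Real.exp (m₂ Z)| * |I₁ - I₂| := by
          rw [abs_mul, abs_mul]
      _ ≤ (Real.exp Mm * |m₁ Z - m₂ Z|) * (τ * Real.exp Mh)
          + Real.exp Mm * (τ * Real.exp Mh * Sh) := by
          apply add_le_add
          · apply mul_le_mul (exp_lip (abs_le.1 hm₁Z).2 (abs_le.1 hm₂Z).2)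
              (by rwa [abs_of_nonneg hI₁0]) (abs_nonneg _) (by positivity)
          · rw [abs_of_pos (Real.exp_pos _)]
            exact mul_le_mul (Real.exp_le_exp.2 (abs_le.1 hm₂Z).2) hIdiff
              (abs_nonneg _) (Real.exp_pos _).le
      _ ≤ K * Sm + K * Sh := by
          have hKeq : K = Real.exp Mm * (τ * Real.exp Mh) := by
            rw [hKdef, Real.exp_add]; ring
          rw [hKeq]
          nlinarith [mul_le_mul_of_nonneg_left hSmub
            (show (0:ℝ) ≤ Real.exp Mm * (τ * Real.exp Mh) by positivity)]
      _ = K * (Sm + Sh) := by ring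
  -- MVT pieces
  have hIccConv : Convex ℝ (Set.Icc (0:ℝ) K) := convex_Icc _ _
  have hIccIci : Set.Icc (0:ℝ) K ⊆ Set.Ici 0 := Set.Icc_subset_Ici_self
  -- G difference
  have hGdiff : |G θ₁ x₁ - G θ₂ x₂| ≤ L * |θ₁ - θ₂| + L * |x₁ - x₂| := by
    have hAθ : |G θ₁ x₁ - G θ₂ x₁| ≤ L * |θ₁ - θ₂| :=
      mvt_abs hΘconv (fun θ hθ => hGθ θ hθ x₁ hx₁mem) hθ₁ hθ₂
    have hAx : |G θ₂ x₁ - G θ₂ x₂| ≤ L * |x₁ - x₂| := by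
      refine mvt_abs hIccConv ?_ hx₁mem hx₂mem
      intro x hx
      exact ⟨g θ₂ x, ((hGg θ₂ hθ₂ x hx.1).1).mono hIccIci, hgL θ₂ hθ₂ x hx⟩
    calc |G θ₁ x₁ - G θ₂ x₂| = |(G θ₁ x₁ - G θ₂ x₁) + (G θ₂ x₁ - G θ₂ x₂)| := by ring_nf
      _ ≤ |G θ₁ x₁ - G θ₂ x₁| + |G θ₂ x₁ - G θ₂ x₂| := abs_add_le _ _
      _ ≤ L * |θ₁ - θ₂| + L * |x₁ - x₂| := add_le_add hAθ hAx
  -- log g difference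
  have hlgdiff : |Real.log (g θ₁ x₁) - Real.log (g θ₂ x₂)| ≤
      L * |θ₁ - θ₂| + L * |x₁ - x₂| := by
    have hAθ : |Real.log (g θ₁ x₁) - Real.log (g θ₂ x₁)| ≤ L * |θ₁ - θ₂| :=
      mvt_abs hΘconv (fun θ hθ => hlgθ θ hθ x₁ hx₁mem) hθ₁ hθ₂
    have hAx : |Real.log (g θ₂ x₁) - Real.log (g θ₂ x₂)| ≤ L * |x₁ - x₂| :=
      mvt_abs hIccConv (fun x hx => hlgx θ₂ hθ₂ x hx) hx₁mem hx₂mem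
    calc |Real.log (g θ₁ x₁) - Real.log (g θ₂ x₂)|
        = |(Real.log (g θ₁ x₁) - Real.log (g θ₂ x₁))
            + (Real.log (g θ₂ x₁) - Real.log (g θ₂ x₂))| := by ring_nf
      _ ≤ _ + _ := abs_add_le _ _
      _ ≤ L * |θ₁ - θ₂| + L * |x₁ - x₂| := add_le_add hAθ hAx
  -- combine
  have hδ1 : |δ| ≤ 1 := by rcases hδ with rfl | rfl <;> simp
  have hδ0 : 0 ≤ |δ| := abs_nonneg _
  have hhT : |h₁ T - h₂ T| ≤ Sh := hShub T ⟨hT0, hTτ⟩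
  have hsplit : lPF d G g h₁ m₁ θ₁ T δ Z - lPF d G g h₂ m₂ θ₂ T δ Z =
      δ * (Real.log (g θ₁ x₁) - Real.log (g θ₂ x₂)) + δ * (h₁ T - h₂ T)
        + δ * (m₁ Z - m₂ Z) - (G θ₁ x₁ - G θ₂ x₂) := by
    simp only [lPF, hx₁, hx₂, hI₁, hI₂]; ring
  rw [hsplit]
  have tri : |δ * (Real.log (g θ₁ x₁) - Real.log (g θ₂ x₂)) + δ * (h₁ T - h₂ T)
        + δ * (m₁ Z - m₂ Z) - (G θ₁ x₁ - G θ₂ x₂)| ≤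
      |δ| * |Real.log (g θ₁ x₁) - Real.log (g θ₂ x₂)| + |δ| * |h₁ T - h₂ T|
        + |δ| * |m₁ Z - m₂ Z| + |G θ₁ x₁ - G θ₂ x₂| := by
    rw [← abs_mul, ← abs_mul, ← abs_mul, sub_eq_add_neg]
    refine (abs_add_le _ _).trans ?_
    rw [abs_neg]
    gcongr
    exact (abs_add_le _ _).trans (by gcongr; exact abs_add_le _ _)
  refine tri.trans ?_
  have b1 : |δ| * |Real.log (g θ₁ x₁) - Real.log (g θ₂ x₂)| ≤
      L * |θ₁ - θ₂| + L * |x₁ - x₂| :=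
    (mul_le_of_le_one_left (abs_nonneg _) hδ1).trans hlgdiff
  have b2 : |δ| * |h₁ T - h₂ T| ≤ Sh :=
    (mul_le_of_le_one_left (abs_nonneg _) hδ1).trans hhT
  have b3 : |δ| * |m₁ Z - m₂ Z| ≤ Sm :=
    (mul_le_of_le_one_left (abs_nonneg _) hδ1).trans hSmub
  have hxd : L * |x₁ - x₂| ≤ L * (K * (Sm + Sh)) :=
    mul_le_mul_of_nonneg_left hxdiff hL.le
  have habs : (0:ℝ) ≤ |θ₁ - θ₂| := abs_nonneg _
  nlinarith [mul_nonneg hL.le hSh0, mul_nonneg hL.le hSm0,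
    mul_nonneg (mul_nonneg hL.le hK.le) habs,
    mul_nonneg (mul_nonneg hL.le hK.le) hSh0,
    mul_nonneg (mul_nonneg hL.le hK.le) hSm0,
    mul_nonneg hL.le habs]
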